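/- arXiv:2506.03080 — 2 statements merged into one kernel-verified Lean document; each statement's English description precedes it below -/
import Mathlib

section
/- Supersaturation: For every k-graph F and δ > 0, there exist ε > 0 and n₀ such that every k-graph on n ≥ n₀ vertices with at least (π(F)+δ)·C(n,k) edges contains at least ε·n^{|V(F)|} copies of F. -/
open Finset Filter Topology

/-- A hypergraph: a finite vertex type together with a finite set of edges
(each edge a finite set of vertices). -/
structure HGraph where
  V : Type
  [fin : Fintype V]
  [dec : DecidableEq V]
  edges : Finset (Finset V)

attribute [instance] HGraph.fin HGraph.dec

/-- `H` is `k`-uniform if every edge has exactly `k` vertices. -/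
def HGraph.IsUniform (k : ℕ) (H : HGraph) : Prop := ∀ e ∈ H.edges, e.card = k

/-- `f` is a copy (embedding) of `F` into `H`. -/
def IsCopy (F H : HGraph) (f : F.V → H.V) : Prop :=
  Function.Injective f ∧ ∀ e ∈ F.edges, e.image f ∈ H.edges

/-- `H` contains a copy of `F`. -/
def HasCopy (F H : HGraph) : Prop := ∃ f, IsCopy F H f

/-- `f` is a homomorphism from `F` to `H`: every edge maps to an edge,
with distinct image vertices. -/
def IsHomOn (F H : HGraph) (f : F.V → H.V) : Prop :=
  ∀ e ∈ F.edges, e.image f ∈ H.edges ∧ (e.image f).card = e.card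

/-- There is a homomorphism from `F` to `H`. -/
def HasHom (F H : HGraph) : Prop := ∃ f, IsHomOn F H f

/-- `H` contains no copy of any member of the family `𝓕`. -/
def Free (F : Set HGraph) (H : HGraph) : Prop := ∀ G ∈ F, ¬ HasCopy G H

/-- The extremal number `ex(n, 𝓕)`: the maximum number of edges in a
`k`-uniform hypergraph on `n` vertices that is `𝓕`-free. -/
noncomputable def exNum (k n : ℕ) (F : Set HGraph) : ℕ :=
  sSup {m | ∃ E : Finset (Finset (Fin n)),
    (∀ e ∈ E, e.card = k) ∧ Free F (HGraph.mk (Fin n) E) ∧ E.card = m}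

/-- The ratio `ex(n,𝓕) / C(n,k)`. -/
noncomputable def exRatio (k : ℕ) (F : Set HGraph) (n : ℕ) : ℝ :=
  (exNum k n F : ℝ) / (n.choose k : ℝ)

/-- The Turán density of a family (the limit of `exRatio`, realized as a limsup;
the limit exists by monotonicity). -/
noncomputable def turanDensity (k : ℕ) (F : Set HGraph) : ℝ :=
  limsup (exRatio k F) atTop

/-- The Turán density of a single hypergraph. -/
noncomputable def turanDensity₁ (k : ℕ) (F : HGraph) : ℝ := turanDensity k {F}

/-- Turn a set of vertices of a finite type into a `Finset`. -/
noncomputable def finsetOf {V : Type} [Fintype V] [DecidableEq V] (s : Set V) : Finset V :=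
  (Set.toFinite s).toFinset

/-- Turn a set of edges into a `Finset` of edges. -/
noncomputable def finsetsOf {V : Type} [Fintype V] [DecidableEq V]
    (s : Set (Finset V)) : Finset (Finset V) :=
  (Set.toFinite s).toFinset

/-- The `t`-blow-up `B(F,t)` of `F`: every vertex is replaced by `t` copies;
edges are all sets picking one copy of each vertex of an edge of `F`. -/
noncomputable def blowup (F : HGraph) (t : ℕ) : HGraph :=
  HGraph.mk (F.V × Fin t)
    (finsetsOf {S | S.image Prod.fst ∈ F.edges ∧ S.card = (S.image Prod.fst).card})

/-- The complete `k`-graph on `N` vertices. -/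
def completeHG (k N : ℕ) : HGraph :=
  HGraph.mk (Fin N) (Finset.univ.powersetCard k)
/-- One edge of the `k`-uniform zycle of length `ℓ`: row `i` together with
vertex `j` of row `i+1` (indices mod `ℓ`, `0`-based). -/
noncomputable def zycleEdge (k l i j : ℕ) : Finset (Fin l × Fin (k-1)) :=
  finsetOf {w | (w.1 : ℕ) = i % l ∨ ((w.1 : ℕ) = (i+1) % l ∧ (w.2 : ℕ) = j)}

/-- The `k`-uniform zycle `Z^{(k)}_ℓ`. -/
noncomputable def zycle (k l : ℕ) : HGraph :=
  HGraph.mk (Fin l × Fin (k-1))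
    (finsetsOf {S | ∃ i j, i < l ∧ j < k-1 ∧ S = zycleEdge k l i j})

/-- The starting set of the zycle: its row `0`. -/
noncomputable def zycleStart (k l : ℕ) : Finset (Fin l × Fin (k-1)) :=
  finsetOf {w | (w.1 : ℕ) = 0}

/-- Row `i` of a ladder-type vertex set `Fin ℓ × Fin (k-1)`. -/
noncomputable def ladderRow (k l i : ℕ) : Finset (Fin l × Fin (k-1)) :=
  finsetOf {w | (w.1 : ℕ) = i}

/-- The `k`-uniform ladder of length `ℓ` restricted to its non-terminal
vertices `v_{ij}`, `i ∈ [ℓ]`, `j ∈ [k-1]` (`0`-based indices). -/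
noncomputable def openLadder (k l : ℕ) : HGraph :=
  HGraph.mk (Fin l × Fin (k-1))
    (finsetsOf {S | ∃ i j, i+1 < l ∧ j < k-1 ∧
      S = finsetOf {w : Fin l × Fin (k-1) |
            (w.1 : ℕ) = i ∨ ((w.1 : ℕ) = i+1 ∧ (w.2 : ℕ) = j)}})

/-- The vertex type of `LZ^{(k)}(m,ℓ)`: ladder vertices `v_{ij}` (`i ∈ [m]`)
and zycle vertices `w_{ij}` (`i ∈ [ℓ]∖{1}`, encoded as `Fin (ℓ-1)`). -/
abbrev lzV (k m l : ℕ) := (Fin m × Fin (k-1)) ⊕ (Fin (l-1) × Fin (k-1))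

/-- `v` is the ladder vertex `v_{ij}` of `LZ` (`0`-based `i`, `j`). -/
def lzVPred (k m l i j : ℕ) (v : lzV k m l) : Prop :=
  ∃ w : Fin m × Fin (k-1), v = Sum.inl w ∧ (w.1 : ℕ) = i ∧ (w.2 : ℕ) = j

/-- `v` is the zycle vertex `w_{(r+2)j}` of `LZ` (`0`-based `r`, `j`). -/
def lzWPred (k m l r j : ℕ) (v : lzV k m l) : Prop :=
  ∃ w : Fin (l-1) × Fin (k-1), v = Sum.inr w ∧ (w.1 : ℕ) = r ∧ (w.2 : ℕ) = j

/-- `LZ^{(k)}(m,ℓ)`: a ladder of length `m` whose last `(k-1)`-set is closed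
into a zycle of length `ℓ`. -/
noncomputable def lz (k m l : ℕ) : HGraph :=
  HGraph.mk (lzV k m l) (finsetsOf (
    {S | ∃ i j, i+1 < m ∧ j < k-1 ∧
        S = finsetOf {v | (∃ j' < k-1, lzVPred k m l i j' v) ∨ lzVPred k m l (i+1) j v}} ∪
    {S | ∃ j, j < k-1 ∧
        S = finsetOf {v | (∃ j' < k-1, lzVPred k m l (m-1) j' v) ∨ lzWPred k m l 0 j v}} ∪
    {S | ∃ r j, r+1 < l-1 ∧ j < k-1 ∧
        S = finsetOf {v | (∃ j' < k-1, lzWPred k m l r j' v) ∨ lzWPred k m l (r+1) j v}} ∪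
    {S | ∃ j, j < k-1 ∧
        S = finsetOf {v | (∃ j' < k-1, lzWPred k m l (l-2) j' v) ∨ lzVPred k m l (m-1) j v}}))

/-- The starting set `{v_{11},…,v_{1(k-1)}}` of `LZ^{(k)}(m,ℓ)`. -/
noncomputable def lzStart (k m l : ℕ) : Finset (lzV k m l) :=
  finsetOf {v | ∃ j < k-1, lzVPred k m l 0 j v}

/-- The pairs of an `s`-set. -/
abbrev pairOf (s : ℕ) := {e : Finset (Fin s) // e.card = 2}

/-- The smaller vertex of a pair. -/
def pairLow {s : ℕ} (e : pairOf s) : Fin s :=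
  e.1.min' (Finset.card_pos.mp (by rw [e.2]; norm_num))

/-- The larger vertex of a pair. -/
def pairHigh {s : ℕ} (e : pairOf s) : Fin s :=
  e.1.max' (Finset.card_pos.mp (by rw [e.2]; norm_num))

/-- Internal ladder vertices of `GL^{(k)}(s,ℓ)`: positions `(i,j)` with
`i ∈ [ℓ]`, `j ∈ [k-1]` except the two positions `(1,k-2),(1,k-1)` of the
first row, which are occupied by the pair itself. (All `0`-based.) -/
abbrev glInner (k s l : ℕ) :=
  pairOf s × {p : Fin l × Fin (k-1) // (p.1 : ℕ) ≠ 0 ∨ (p.2 : ℕ) < k-3}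

/-- Vertex type of `GL^{(k)}(s,ℓ)`: the `s`-set `X`, the internal ladder
vertices, and the terminal vertices `t^e`. -/
abbrev glV (k s l : ℕ) := Fin s ⊕ glInner k s l ⊕ pairOf s

/-- `v` is the vertex `v^e_{ij}` of `GL^{(k)}(s,ℓ)` (`0`-based `i,j`); the two
last vertices of the first row of the ladder at `e` are the vertices of `e`. -/
def glVPred (k s l : ℕ) (e : pairOf s) (i j : ℕ) (v : glV k s l) : Prop :=
  (∃ w : glInner k s l, v = Sum.inr (Sum.inl w) ∧ w.1 = e ∧
      (w.2.1.1 : ℕ) = i ∧ (w.2.1.2 : ℕ) = j) ∨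
  (i = 0 ∧ j = k-3 ∧ v = Sum.inl (pairLow e)) ∨
  (i = 0 ∧ j = k-2 ∧ v = Sum.inl (pairHigh e))

/-- `GL^{(k)}(s,ℓ)`: to each pair `e` of the `s`-set `X` an internally
disjoint `k`-uniform ladder of length `ℓ` (with terminal vertex `t^e`) is
attached, the first row of the ladder at `e` ending in the two vertices of `e`. -/
noncomputable def gl (k s l : ℕ) : HGraph :=
  HGraph.mk (glV k s l) (finsetsOf (
    {S | ∃ e i j, i+1 < l ∧ j < k-1 ∧
        S = finsetOf {v | (∃ j' < k-1, glVPred k s l e i j' v) ∨ glVPred k s l e (i+1) j v}} ∪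
    {S | ∃ e, S = finsetOf {v | (∃ j' < k-1, glVPred k s l e (l-1) j' v) ∨
        v = Sum.inr (Sum.inr e)}}))

/-- Internal ladder vertices of `GLZ^{(k)}(s,m,ℓ)` (ladders of length `m`). -/
abbrev glzInner (k s m : ℕ) :=
  pairOf s × {p : Fin m × Fin (k-1) // (p.1 : ℕ) ≠ 0 ∨ (p.2 : ℕ) < k-3}

/-- Vertex type of `GLZ^{(k)}(s,m,ℓ)`. -/
abbrev glzV (k s m l : ℕ) := Fin s ⊕ glzInner k s m ⊕ (pairOf s × (Fin (l-1) × Fin (k-1)))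

/-- `v` is the ladder vertex `v^e_{ij}` of `GLZ^{(k)}(s,m,ℓ)`. -/
def glzVPred (k s m l : ℕ) (e : pairOf s) (i j : ℕ) (v : glzV k s m l) : Prop :=
  (∃ w : glzInner k s m, v = Sum.inr (Sum.inl w) ∧ w.1 = e ∧
      (w.2.1.1 : ℕ) = i ∧ (w.2.1.2 : ℕ) = j) ∨
  (i = 0 ∧ j = k-3 ∧ v = Sum.inl (pairLow e)) ∨
  (i = 0 ∧ j = k-2 ∧ v = Sum.inl (pairHigh e))

/-- `v` is the zycle vertex `w^e_{(r+2)j}` of `GLZ^{(k)}(s,m,ℓ)`. -/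
def glzWPred (k s m l : ℕ) (e : pairOf s) (r j : ℕ) (v : glzV k s m l) : Prop :=
  ∃ w : pairOf s × (Fin (l-1) × Fin (k-1)), v = Sum.inr (Sum.inr w) ∧ w.1 = e ∧
    (w.2.1 : ℕ) = r ∧ (w.2.2 : ℕ) = j

/-- `GLZ^{(k)}(s,m,ℓ)`: obtained from `GL^{(k)}(s,m)` (without terminal
vertices) by closing the end of each ladder into a zycle of length `ℓ`. -/
noncomputable def glz (k s m l : ℕ) : HGraph :=
  HGraph.mk (glzV k s m l) (finsetsOf (
    {S | ∃ e i j, i+1 < m ∧ j < k-1 ∧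
        S = finsetOf {v | (∃ j' < k-1, glzVPred k s m l e i j' v) ∨
              glzVPred k s m l e (i+1) j v}} ∪
    {S | ∃ e j, j < k-1 ∧
        S = finsetOf {v | (∃ j' < k-1, glzVPred k s m l e (m-1) j' v) ∨
              glzWPred k s m l e 0 j v}} ∪
    {S | ∃ e r j, r+1 < l-1 ∧ j < k-1 ∧
        S = finsetOf {v | (∃ j' < k-1, glzWPred k s m l e r j' v) ∨
              glzWPred k s m l e (r+1) j v}} ∪
    {S | ∃ e j, j < k-1 ∧
        S = finsetOf {v | (∃ j' < k-1, glzWPred k s m l e (l-2) j' v) ∨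
              glzVPred k s m l e (m-1) j v}}))
section Aux
open Finset Filter Topology

lemma card_supersets {α : Type*} [Fintype α] [DecidableEq α] (t : Finset α) {m : ℕ} (ht : t.card ≤ m) :
    ((univ.powersetCard m : Finset (Finset α)).filter (fun S => t ⊆ S)).card
      = (Fintype.card α - t.card).choose (m - t.card) := by
  rw [← Finset.card_compl t, ← card_powersetCard]
  apply card_nbij' (i := fun S => S \ t) (j := fun u => u ∪ t)
  · intro S hS
    simp only [mem_coe, mem_filter, mem_powersetCard_univ] at hS
    simp only [mem_coe, mem_powersetCard]
    refine ⟨fun x hx => ?_, ?_⟩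
    · exact Finset.mem_compl.mpr (Finset.mem_sdiff.mp hx).2
    · rw [card_sdiff_of_subset hS.2, hS.1]
  · intro u hu
    simp only [mem_coe, mem_powersetCard] at hu
    have hdisj : Disjoint u t := by
      rw [disjoint_left]; intro a ha hat
      have := hu.1 ha; simp [hat] at this
    simp only [mem_coe, mem_filter, mem_powersetCard_univ]
    refine ⟨?_, subset_union_right⟩
    rw [card_union_of_disjoint hdisj, hu.2]
    omega
  · intro S hS
    simp only [mem_coe, mem_filter, mem_powersetCard_univ] at hS
    exact sdiff_union_of_subset hS.2
  · intro u hu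
    simp only [mem_coe, mem_powersetCard] at hu
    have hdisj : Disjoint u t := by
      rw [disjoint_left]; intro a ha hat
      have := hu.1 ha; simp [hat] at this
    exact union_sdiff_cancel_right hdisj

lemma exNum_mem_le {k n : ℕ} {E : Finset (Finset (Fin n))}
    (hE : ∀ e ∈ E, e.card = k) : E.card ≤ n.choose k := by
  classical
  calc E.card ≤ (univ.powersetCard k : Finset (Finset (Fin n))).card := by
        apply card_le_card
        intro e he
        simpa [mem_powersetCard_univ] using hE e he
    _ = n.choose k := by simp [card_powersetCard]

lemma exNum_le_choose (k n : ℕ) (Fs : Set HGraph) : exNum k n Fs ≤ n.choose k := by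
  apply csSup_le'
  rintro m ⟨E, hE, -, rfl⟩
  exact exNum_mem_le hE

lemma le_exNum {k n : ℕ} {Fs : Set HGraph} {E : Finset (Finset (Fin n))}
    (hE : ∀ e ∈ E, e.card = k) (hfree : Free Fs (HGraph.mk (Fin n) E)) :
    E.card ≤ exNum k n Fs := by
  apply le_csSup
  · exact ⟨n.choose k, by rintro m ⟨E', hE', -, rfl⟩; exact exNum_mem_le hE'⟩
  · exact ⟨E, hE, hfree, rfl⟩

lemma hasCopy_of_exNum_lt {k m : ℕ} (F : HGraph) {E : Finset (Finset (Fin m))}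
    (hE : ∀ e ∈ E, e.card = k) (h : exNum k m {F} < E.card) :
    HasCopy F (HGraph.mk (Fin m) E) := by
  by_contra hc
  have hfree : Free {F} (HGraph.mk (Fin m) E) := by
    intro G hG
    rw [Set.mem_singleton_iff] at hG
    subst hG; exact hc
  exact absurd (le_exNum hE hfree) (not_le.mpr h)

lemma exRatio_le_one (k : ℕ) (Fs : Set HGraph) (n : ℕ) : exRatio k Fs n ≤ 1 := by
  unfold exRatio
  rcases eq_or_ne ((n.choose k : ℝ)) 0 with h | h
  · simp [h]
  · rw [div_le_one (lt_of_le_of_ne (by positivity) (Ne.symm h))]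
    exact_mod_cast exNum_le_choose k n Fs

end Aux

lemma copy_in_subset {k : ℕ} (F H : HGraph) (hHu : H.IsUniform k) (m : ℕ)
    (S : Finset H.V) (hS : S.card = m)
    (hlt : exNum k m {F} < (H.edges.filter (fun e => e ⊆ S)).card) :
    ∃ f : F.V → H.V, IsCopy F H f ∧ ∀ a, f a ∈ S := by
  classical
  have hcard : Fintype.card {x // x ∈ S} = m := by simp [hS]
  let σ : {x // x ∈ S} ≃ Fin m := Fintype.equivFinOfCardEq hcard
  let ι : Fin m → H.V := fun i => (σ.symm i : H.V)
  have hιinj : Function.Injective ι := fun a b hab => by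
    simpa using σ.symm.injective (Subtype.ext hab)
  have hιS : ∀ i, ι i ∈ S := fun i => (σ.symm i).2
  have himg : ∀ e : Finset H.V, e ⊆ S →
      (univ.filter (fun i => ι i ∈ e)).image ι = e := by
    intro e heS
    ext x
    simp only [mem_image, mem_filter, mem_univ, true_and]
    constructor
    · rintro ⟨i, hi, rfl⟩; exact hi
    · intro hx
      refine ⟨σ ⟨x, heS hx⟩, ?_, ?_⟩ <;> simp [ι, hx]
  set E : Finset (Finset (Fin m)) := univ.filter (fun e' => e'.image ι ∈ H.edges) with hE
  have hEu : ∀ e' ∈ E, e'.card = k := by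
    intro e' he'
    rw [hE, mem_filter] at he'
    have := hHu _ he'.2
    rwa [card_image_of_injective _ hιinj] at this
  have hle : (H.edges.filter (fun e => e ⊆ S)).card ≤ E.card := by
    apply card_le_card_of_injOn (fun e => univ.filter (fun i => ι i ∈ e))
    · intro e he
      rw [mem_coe, mem_filter] at he
      rw [mem_coe, hE, mem_filter]
      exact ⟨mem_univ _, by rw [himg e he.2]; exact he.1⟩
    · intro e₁ h₁ e₂ h₂ heq
      simp only [mem_coe, mem_filter] at h₁ h₂
      rw [← himg e₁ h₁.2, ← himg e₂ h₂.2]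
      exact congrArg (Finset.image ι) heq
  obtain ⟨f', hf'⟩ := hasCopy_of_exNum_lt F hEu (lt_of_lt_of_le hlt hle)
  refine ⟨ι ∘ f', ⟨hιinj.comp hf'.1, ?_⟩, fun a => hιS _⟩
  intro e he
  have h2 := hf'.2 e he
  rw [hE, mem_filter] at h2
  rw [← Finset.image_image]
  exact h2.2

lemma sum_induced {k : ℕ} (H : HGraph) (hHu : H.IsUniform k) {m : ℕ} (hk : k ≤ m) :
    ∑ S ∈ (univ.powersetCard m : Finset (Finset H.V)),
        (H.edges.filter (fun e => e ⊆ S)).card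
      = H.edges.card * (Fintype.card H.V - k).choose (m - k) := by
  classical
  calc ∑ S ∈ (univ.powersetCard m : Finset (Finset H.V)),
        (H.edges.filter (fun e => e ⊆ S)).card
      = ∑ e ∈ H.edges,
          ((univ.powersetCard m : Finset (Finset H.V)).filter (fun S => e ⊆ S)).card := by
        simp_rw [card_filter]
        exact Finset.sum_comm
    _ = ∑ _e ∈ H.edges, (Fintype.card H.V - k).choose (m - k) := by
        apply Finset.sum_congr rfl
        intro e he
        rw [card_supersets e (by rw [hHu e he]; exact hk), hHu e he]
    _ = _ := by rw [Finset.sum_const, smul_eq_mul, mul_comm]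

/-- Supersaturation: For every `k`-graph `F` and `δ > 0` there
are `ε > 0` and `n₀` such that every `k`-graph on `n ≥ n₀` vertices with at
least `(π(F)+δ)·C(n,k)` edges contains at least `ε·n^{|V(F)|}` copies of `F`. -/
theorem supersaturation (k : ℕ) (F : HGraph) (hF : F.IsUniform k)
    (δ : ℝ) (hδ : 0 < δ) :
    ∃ ε : ℝ, 0 < ε ∧ ∃ n₀ : ℕ, ∀ H : HGraph, H.IsUniform k →
      n₀ ≤ Fintype.card H.V →
      (turanDensity₁ k F + δ) * ((Fintype.card H.V).choose k : ℝ) ≤ H.edges.card →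
      ε * (Fintype.card H.V : ℝ) ^ (Fintype.card F.V) ≤
        (Nat.card {f : F.V → H.V // IsCopy F H f} : ℝ) := by
  classical
  set π : ℝ := turanDensity₁ k F with hπdef
  set v : ℕ := Fintype.card F.V with hvdef
  -- choose a good m
  have hbdd : IsBoundedUnder (· ≤ ·) atTop (exRatio k {F}) :=
    isBoundedUnder_of ⟨1, fun n => exRatio_le_one k {F} n⟩
  have hlim : limsup (exRatio k {F}) atTop < π + δ/2 := by
    have hh : limsup (exRatio k {F}) atTop = π := rfl
    rw [hh]; linarith
  obtain ⟨m, hm⟩ := ((eventually_ge_atTop (k + v + 1)).and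
    (eventually_lt_of_limsup_lt hlim hbdd)).exists
  have hkm : k ≤ m := by omega
  have hvm : v ≤ m := by omega
  have hm1 : 1 ≤ m := by omega
  have hCmvpos : (0:ℝ) < (m.choose v : ℝ) := by exact_mod_cast Nat.choose_pos hvm
  have hfacpos : (0:ℝ) < (v.factorial : ℝ) := by exact_mod_cast v.factorial_pos
  refine ⟨δ / (2 * (m.choose v) * v.factorial * 2^v), by positivity, m + 2*v, ?_⟩
  intro H hHu hn hedge
  set ε : ℝ := δ / (2 * (m.choose v) * v.factorial * 2^v) with hεdef
  set n : ℕ := Fintype.card H.V with hndef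
  have hmn : m ≤ n := by omega
  have h2vn : 2*v ≤ n := by omega
  haveI : Nonempty H.V := Fintype.card_pos_iff.mp (by omega)
  set x : ℕ := exNum k m {F} with hxdef
  set good : Finset (Finset H.V) :=
    (univ.powersetCard m).filter
      (fun S => x < (H.edges.filter (fun e => e ⊆ S)).card) with hgood
  -- Claim A : many good sets
  have hNcard : ((univ.powersetCard m : Finset (Finset H.V))).card = n.choose m := by
    rw [card_powersetCard, card_univ]
  have hsum := sum_induced H hHu hkm
  have hES : ∀ S ∈ (univ.powersetCard m : Finset (Finset H.V)),
      (H.edges.filter (fun e => e ⊆ S)).card ≤ m.choose k := by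
    intro S hS
    rw [mem_powersetCard_univ] at hS
    calc (H.edges.filter (fun e => e ⊆ S)).card ≤ (S.powersetCard k).card := by
          apply card_le_card
          intro e he
          rw [mem_filter] at he
          rw [mem_powersetCard]
          exact ⟨he.2, hHu _ he.1⟩
      _ = m.choose k := by rw [card_powersetCard, hS]
  have hsplit : H.edges.card * (n - k).choose (m - k)
      ≤ good.card * m.choose k + n.choose m * x := by
    rw [← hsum, ← sum_filter_add_sum_filter_not (univ.powersetCard m)
      (fun S => x < (H.edges.filter (fun e => e ⊆ S)).card)]
    have t1 : ∑ S ∈ (univ.powersetCard m : Finset (Finset H.V)).filter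
        (fun S => x < (H.edges.filter (fun e => e ⊆ S)).card),
        (H.edges.filter (fun e => e ⊆ S)).card ≤ good.card * m.choose k := by
      rw [hgood]
      calc _ ≤ ∑ _S ∈ (univ.powersetCard m : Finset (Finset H.V)).filter
            (fun S => x < (H.edges.filter (fun e => e ⊆ S)).card), m.choose k :=
            Finset.sum_le_sum (fun S hS => hES S (mem_of_mem_filter S hS))
        _ = _ := by rw [Finset.sum_const, smul_eq_mul]
    have t2 : ∑ S ∈ (univ.powersetCard m : Finset (Finset H.V)).filter
        (fun S => ¬ x < (H.edges.filter (fun e => e ⊆ S)).card),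
        (H.edges.filter (fun e => e ⊆ S)).card ≤ n.choose m * x := by
      calc _ ≤ ∑ _S ∈ (univ.powersetCard m : Finset (Finset H.V)).filter
            (fun S => ¬ x < (H.edges.filter (fun e => e ⊆ S)).card), x :=
            Finset.sum_le_sum (fun S hS => not_lt.mp (mem_filter.mp hS).2)
        _ = ((univ.powersetCard m : Finset (Finset H.V)).filter
            (fun S => ¬ x < (H.edges.filter (fun e => e ⊆ S)).card)).card * x := by
            rw [Finset.sum_const, smul_eq_mul]
        _ ≤ n.choose m * x := by
            apply Nat.mul_le_mul_right
            rw [← hNcard]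
            exact card_filter_le _ _
    omega
  have hCmkpos : (0:ℝ) < (m.choose k : ℝ) := by exact_mod_cast Nat.choose_pos hkm
  have hid1 : ((n.choose k : ℝ)) * ((n - k).choose (m - k)) =
      (n.choose m : ℝ) * (m.choose k) := by
    exact_mod_cast congrArg (Nat.cast (R := ℝ)) (Nat.choose_mul (n := n) hkm).symm
  have h1 : (π + δ) * ((n.choose m : ℝ) * (m.choose k))
      ≤ (H.edges.card : ℝ) * ((n - k).choose (m - k)) := by
    rw [← hid1, ← mul_assoc]
    exact mul_le_mul_of_nonneg_right hedge (Nat.cast_nonneg _)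
  have h2 : (H.edges.card : ℝ) * ((n - k).choose (m - k))
      ≤ (good.card : ℝ) * (m.choose k) + (n.choose m : ℝ) * x := by
    exact_mod_cast hsplit
  have hx : (x:ℝ) < (π + δ/2) * (m.choose k) := by
    have hexm := hm.2
    unfold exRatio at hexm
    rw [div_lt_iff₀ hCmkpos] at hexm
    exact_mod_cast hexm
  have h3 : (n.choose m : ℝ) * x ≤ (n.choose m : ℝ) * ((π + δ/2) * (m.choose k)) :=
    mul_le_mul_of_nonneg_left hx.le (Nat.cast_nonneg _)
  have claimA : (δ/2) * (n.choose m : ℝ) ≤ (good.card : ℝ) := by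
    have h4 : (δ/2) * (n.choose m : ℝ) * (m.choose k) ≤ (good.card : ℝ) * (m.choose k) := by
      nlinarith
    exact le_of_mul_le_mul_right h4 hCmkpos
  -- Claim B : each good set yields a copy, counted with multiplicity
  set copyset : Finset (F.V → H.V) := univ.filter (fun f => IsCopy F H f) with hcs
  set D : ℕ := (n - v).choose (m - v) with hDdef
  let φ : Finset H.V → (F.V → H.V) := fun S =>
    if h : ∃ f, IsCopy F H f ∧ ∀ a, f a ∈ S then h.choose else Classical.arbitrary _
  have hφ : ∀ S ∈ good, IsCopy F H (φ S) ∧ ∀ a, φ S a ∈ S := by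
    intro S hS
    rw [hgood, mem_filter, mem_powersetCard_univ] at hS
    have hex := copy_in_subset F H hHu m S hS.1 hS.2
    simp only [φ, dif_pos hex]
    exact hex.choose_spec
  have claimB : good.card ≤ D * copyset.card := by
    calc good.card ≤ D * (good.image φ).card := by
          apply Finset.card_le_mul_card_image
          intro a ha
          obtain ⟨S₀, hS₀, rfl⟩ := mem_image.mp ha
          have hc₀ := hφ S₀ hS₀
          set t : Finset H.V := univ.image (φ S₀) with ht
          have htc : t.card = v := by
            rw [ht, card_image_of_injective _ hc₀.1.1, card_univ, hvdef]
          calc (good.filter (fun S => φ S = φ S₀)).card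
              ≤ ((univ.powersetCard m : Finset (Finset H.V)).filter
                  (fun S => t ⊆ S)).card := by
                apply card_le_card
                intro S hS
                rw [mem_filter] at hS ⊢
                obtain ⟨hSg, hSeq⟩ := hS
                have hmem : S ∈ (univ.powersetCard m : Finset (Finset H.V)) :=
                  mem_of_mem_filter S hSg
                refine ⟨hmem, ?_⟩
                intro y hy
                rw [ht, mem_image] at hy
                obtain ⟨a, -, rfl⟩ := hy
                rw [← hSeq]
                exact (hφ S hSg).2 a
            _ = D := by rw [card_supersets t (htc ▸ hvm), htc]
        _ ≤ D * copyset.card := by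
          apply Nat.mul_le_mul_left
          apply card_le_card
          intro f hf
          obtain ⟨S₀, hS₀, rfl⟩ := mem_image.mp hf
          rw [hcs, mem_filter]
          exact ⟨mem_univ _, (hφ S₀ hS₀).1⟩
  have hcount : (Nat.card {f : F.V → H.V // IsCopy F H f}) = copyset.card := by
    rw [Nat.card_eq_fintype_card, hcs, Fintype.card_subtype]
  rw [hcount]
  -- final arithmetic
  have hDpos : (0:ℝ) < (D : ℝ) := by
    rw [hDdef]
    exact_mod_cast Nat.choose_pos (by omega : m - v ≤ n - v)
  have hid2 : (n.choose m : ℝ) * (m.choose v) = (n.choose v : ℝ) * D := by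
    rw [hDdef]
    exact_mod_cast congrArg (Nat.cast (R := ℝ)) (Nat.choose_mul (n := n) hvm)
  have hpow : (n:ℝ)^v ≤ 2^v * ((v.factorial : ℝ) * (n.choose v)) := by
    have hd : ((n + 1 - v : ℕ) : ℝ)^v ≤ (v.factorial : ℝ) * (n.choose v) := by
      exact_mod_cast (Nat.pow_sub_le_descFactorial n v).trans_eq
        (Nat.descFactorial_eq_factorial_mul_choose n v)
    have hcast : ((n + 1 - v : ℕ) : ℝ) = (n : ℝ) + 1 - v := by
      have : v ≤ n + 1 := by omega
      push_cast [this]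
      ring
    have hhalf : (n:ℝ)/2 ≤ ((n + 1 - v : ℕ) : ℝ) := by
      rw [hcast]
      have : (v:ℝ) * 2 ≤ (n:ℝ) := by exact_mod_cast (by omega : v*2 ≤ n)
      linarith
    have hp : ((n:ℝ)/2)^v ≤ ((n + 1 - v : ℕ) : ℝ)^v :=
      pow_le_pow_left₀ (by positivity) hhalf v
    have : ((n:ℝ)/2)^v ≤ (v.factorial : ℝ) * (n.choose v) := hp.trans hd
    rw [div_pow] at this
    rw [show (n:ℝ)^v = 2^v * ((n:ℝ)^v / 2^v) by field_simp]
    exact mul_le_mul_of_nonneg_left this (by positivity)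
  have key : ε * (n:ℝ)^v * (m.choose v) ≤ δ/2 * (n.choose v) := by
    rw [show ε * (n:ℝ)^v * (m.choose v)
        = δ * (n:ℝ)^v / (2 * (v.factorial : ℝ) * 2^v) by
      rw [hεdef]; field_simp]
    rw [div_le_iff₀ (by positivity)]
    nlinarith [mul_le_mul_of_nonneg_left hpow (le_of_lt hδ)]
  have step1 : ε * (n:ℝ)^v * D ≤ (δ/2) * (n.choose m : ℝ) := by
    have h5 : (ε * (n:ℝ)^v * D) * (m.choose v) ≤ ((δ/2) * (n.choose m : ℝ)) * (m.choose v) := by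
      have h6 : (ε * (n:ℝ)^v * (m.choose v)) * D ≤ (δ/2 * (n.choose v)) * D :=
        mul_le_mul_of_nonneg_right key hDpos.le
      calc (ε * (n:ℝ)^v * D) * (m.choose v) = (ε * (n:ℝ)^v * (m.choose v)) * D := by ring
        _ ≤ (δ/2 * (n.choose v)) * D := h6
        _ = ((δ/2) * (n.choose m : ℝ)) * (m.choose v) := by rw [mul_assoc, ← hid2]; ring
    exact le_of_mul_le_mul_right h5 hCmvpos
  have step2 : (δ/2) * (n.choose m : ℝ) ≤ (copyset.card : ℝ) * D := by
    calc (δ/2) * (n.choose m : ℝ) ≤ (good.card : ℝ) := claimA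
      _ ≤ (copyset.card : ℝ) * D := by
          rw [mul_comm]
          exact_mod_cast claimB
  exact le_of_mul_le_mul_right (step1.trans step2) hDpos
end

section
/- For all integers k ≥ 3, m ≥ 2 and j ≤ j', there is a homomorphism from LZ^{(k)}(j', m) to LZ^{(k)}(j, m) that maps the starting set {v_{11},…,v_{1(k-1)}} of LZ(j',m) bijectively onto the starting set of LZ(j,m). -/
open Finset Filter Topology

section LZHomAux

variable {k : ℕ}

lemma mem_finsetOf {V : Type} [Fintype V] [DecidableEq V] {s : Set V} {v : V} :
    v ∈ finsetOf s ↔ v ∈ s := Set.Finite.mem_toFinset _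

lemma mem_finsetsOf {V : Type} [Fintype V] [DecidableEq V] {s : Set (Finset V)}
    {e : Finset V} : e ∈ finsetsOf s ↔ e ∈ s := Set.Finite.mem_toFinset _

lemma lzVPred_iff {M l i b : ℕ} {v : lzV k M l} :
    lzVPred k M l i b v ↔ ∃ (hi : i < M) (hb : b < k-1), v = Sum.inl (⟨i,hi⟩, ⟨b,hb⟩) := by
  constructor
  · rintro ⟨w, rfl, h1, h2⟩
    refine ⟨h1 ▸ w.1.isLt, h2 ▸ w.2.isLt, ?_⟩
    simp only [Sum.inl.injEq, Prod.ext_iff, Fin.ext_iff]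
    exact ⟨h1, h2⟩
  · rintro ⟨hi, hb, rfl⟩
    exact ⟨_, rfl, rfl, rfl⟩

lemma lzWPred_iff {M l r b : ℕ} {v : lzV k M l} :
    lzWPred k M l r b v ↔ ∃ (hr : r < l-1) (hb : b < k-1), v = Sum.inr (⟨r,hr⟩, ⟨b,hb⟩) := by
  constructor
  · rintro ⟨w, rfl, h1, h2⟩
    refine ⟨h1 ▸ w.1.isLt, h2 ▸ w.2.isLt, ?_⟩
    simp only [Sum.inr.injEq, Prod.ext_iff, Fin.ext_iff]
    exact ⟨h1, h2⟩
  · rintro ⟨hr, hb, rfl⟩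
    exact ⟨_, rfl, rfl, rfl⟩

/-- Vertex of `lz k j m` at "step position" `t` along the ladder-plus-zycle walk. -/
def tV (k j m : ℕ) (hj : 0 < j) (hm : 2 ≤ m) (t : ℕ) (b : Fin (k-1)) : lzV k j m :=
  if h : t < j then Sum.inl (⟨t, h⟩, b)
  else if h2 : (t - (j-1)) % m = 0 then Sum.inl (⟨j-1, by omega⟩, b)
  else Sum.inr (⟨(t - (j-1)) % m - 1, by
      have := Nat.mod_lt (t-(j-1)) (show 0 < m by omega); omega⟩, b)

lemma tV_eq_ladder {j m : ℕ} (hj : 0 < j) (hm : 2 ≤ m) {t : ℕ} (ht : t < j) (b : Fin (k-1)) :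
    tV k j m hj hm t b = Sum.inl (⟨t, ht⟩, b) := by
  unfold tV; rw [dif_pos ht]

lemma tV_eq_base {j m : ℕ} (hj : 0 < j) (hm : 2 ≤ m) {t : ℕ} (ht : ¬ t < j)
    (h0 : (t - (j-1)) % m = 0) (b : Fin (k-1)) :
    tV k j m hj hm t b = Sum.inl (⟨j-1, by omega⟩, b) := by
  unfold tV; rw [dif_neg ht, dif_pos h0]

lemma tV_eq_zy {j m : ℕ} (hj : 0 < j) (hm : 2 ≤ m) {t r : ℕ} (ht : ¬ t < j)
    (h0 : (t - (j-1)) % m ≠ 0) (hr : (t - (j-1)) % m - 1 = r) (hr2 : r < m-1) (b : Fin (k-1)) :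
    tV k j m hj hm t b = Sum.inr (⟨r, hr2⟩, b) := by
  subst hr; unfold tV; rw [dif_neg ht, dif_neg h0]

lemma mod_succ_cases (a m : ℕ) (hm : 2 ≤ m) :
    ((a+1) % m = a % m + 1 ∧ a % m + 1 < m) ∨ ((a+1) % m = 0 ∧ a % m = m - 1) := by
  have h := Nat.mod_lt a (show 0 < m by omega)
  have e : (a+1) % m = (a % m + 1) % m := by
    rw [Nat.add_mod, Nat.mod_eq_of_lt (show 1 < m by omega)]
  rcases Nat.lt_or_ge (a % m + 1) m with h1 | h1
  · exact Or.inl ⟨by rw [e, Nat.mod_eq_of_lt h1], h1⟩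
  · have h2 : a % m + 1 = m := by omega
    exact Or.inr ⟨by rw [e, h2, Nat.mod_self], by omega⟩

lemma tV_per {j m : ℕ} (hj : 0 < j) (hm : 2 ≤ m) (t : ℕ) (ht : j - 1 ≤ t) (b : Fin (k-1)) :
    tV k j m hj hm (t + m) b = tV k j m hj hm t b := by
  have h1 : ¬ t + m < j := by omega
  rcases Nat.lt_or_ge t j with h | h
  · have ht' : t = j - 1 := by omega
    have h0 : (t + m - (j-1)) % m = 0 := by
      rw [show t + m - (j-1) = m by omega]; exact Nat.mod_self m
    rw [tV_eq_base hj hm h1 h0, tV_eq_ladder hj hm h]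
    simp only [Sum.inl.injEq, Prod.ext_iff, Fin.ext_iff]
    exact ⟨by omega, trivial⟩
  · have he : t + m - (j-1) = (t - (j-1)) + m := by omega
    unfold tV
    rw [dif_neg h1, dif_neg (by omega : ¬ t < j)]
    simp only [he, Nat.add_mod_right]

lemma tV_inj {j m : ℕ} (hj : 0 < j) (hm : 2 ≤ m) (t : ℕ) :
    Function.Injective (tV k j m hj hm t) := by
  intro a b h
  unfold tV at h
  split_ifs at h <;> simp_all

lemma tV_ne' {j m : ℕ} (hj : 0 < j) (hm : 2 ≤ m) {t t' : ℕ} (htt : t' = t + 1)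
    (b b' : Fin (k-1)) : tV k j m hj hm t b ≠ tV k j m hj hm t' b' := by
  subst htt
  have hm0 : 0 < m := by omega
  have hc := Nat.mod_lt (t - (j-1)) hm0
  by_cases h1 : t + 1 < j
  · rw [tV_eq_ladder hj hm (by omega), tV_eq_ladder hj hm h1]
    simp only [ne_eq, Sum.inl.injEq, Prod.ext_iff, Fin.ext_iff, not_and]
    omega
  · by_cases h2 : t < j
    · have hc' : (t + 1 - (j-1)) % m = 1 := by
        rw [show t + 1 - (j-1) = 1 by omega, Nat.mod_eq_of_lt (by omega)]
      rw [tV_eq_ladder hj hm h2,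
        tV_eq_zy hj hm h1 (by omega) (show (t + 1 - (j-1)) % m - 1 = 0 by omega) (by omega) b']
      simp
    · have he : t + 1 - (j-1) = (t - (j-1)) + 1 := by omega
      rcases mod_succ_cases (t - (j-1)) m hm with ⟨hA, hA2⟩ | ⟨hB, hB2⟩
      · by_cases h0 : (t - (j-1)) % m = 0
        · rw [tV_eq_base hj hm h2 h0,
            tV_eq_zy hj hm h1 (by rw [he]; omega)
              (show (t + 1 - (j-1)) % m - 1 = 0 by rw [he]; omega) (by omega) b']
          simp
        · rw [tV_eq_zy hj hm h2 h0 rfl (by omega) b,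
            tV_eq_zy hj hm h1 (by rw [he]; omega)
              (show (t + 1 - (j-1)) % m - 1 = (t - (j-1)) % m + 1 - 1 by rw [he]; omega)
              (show (t - (j-1)) % m + 1 - 1 < m - 1 by omega) b']
          simp only [ne_eq, Sum.inr.injEq, Prod.ext_iff, Fin.ext_iff, not_and]
          omega
      · rw [tV_eq_zy hj hm h2 (by omega) rfl (by omega) b,
          tV_eq_base hj hm h1 (by rw [he]; exact hB)]
        simp

/-- The explicit-step edge of `lz k j m`. -/
def edg (k j m : ℕ) (hj : 0 < j) (hm : 2 ≤ m) (t : ℕ) (j0 : Fin (k-1)) :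
    Finset (lzV k j m) :=
  (Finset.univ.image fun b => tV k j m hj hm t b) ∪ {tV k j m hj hm (t+1) j0}

lemma card_row_union {W : Type} [DecidableEq W] (hk : 3 ≤ k) (g : Fin (k-1) → W) (x : W)
    (hg : Function.Injective g) (hx : ∀ b, g b ≠ x) :
    ((Finset.univ.image g) ∪ {x}).card = k := by
  rw [Finset.union_comm, ← Finset.insert_eq,
    Finset.card_insert_of_notMem (by
      simp only [Finset.mem_image, Finset.mem_univ, true_and, not_exists]
      exact fun b hb => hx b hb),
    Finset.card_image_of_injective _ hg, Finset.card_univ, Fintype.card_fin]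
  omega

lemma edg_card {j m : ℕ} (hk : 3 ≤ k) (hj : 0 < j) (hm : 2 ≤ m) (t : ℕ) (j0 : Fin (k-1)) :
    (edg k j m hj hm t j0).card = k :=
  card_row_union hk _ _ (tV_inj hj hm t) (fun b => tV_ne' hj hm rfl b j0)

lemma union_VV {M l : ℕ} (i1 i2 c : ℕ) (h1 : i1 < M) (h2 : i2 < M) (hc : c < k-1) :
    ((Finset.univ.image fun b : Fin (k-1) => (Sum.inl (⟨i1,h1⟩, b) : lzV k M l)) ∪
      {Sum.inl (⟨i2,h2⟩, ⟨c,hc⟩)})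
      = finsetOf {v | (∃ c' < k-1, lzVPred k M l i1 c' v) ∨ lzVPred k M l i2 c v} := by
  ext v
  simp only [Finset.mem_union, Finset.mem_image, Finset.mem_univ, true_and,
    Finset.mem_singleton, mem_finsetOf, Set.mem_setOf_eq, lzVPred_iff]
  constructor
  · rintro (⟨b, rfl⟩ | rfl)
    · exact Or.inl ⟨↑b, b.isLt, h1, b.isLt, rfl⟩
    · exact Or.inr ⟨h2, hc, rfl⟩
  · rintro (⟨c', hc', hi, hb, rfl⟩ | ⟨hi, hb, rfl⟩)
    · exact Or.inl ⟨⟨c', hb⟩, rfl⟩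
    · exact Or.inr rfl

lemma union_VW {M l : ℕ} (i1 r2 c : ℕ) (h1 : i1 < M) (h2 : r2 < l-1) (hc : c < k-1) :
    ((Finset.univ.image fun b : Fin (k-1) => (Sum.inl (⟨i1,h1⟩, b) : lzV k M l)) ∪
      {Sum.inr (⟨r2,h2⟩, ⟨c,hc⟩)})
      = finsetOf {v | (∃ c' < k-1, lzVPred k M l i1 c' v) ∨ lzWPred k M l r2 c v} := by
  ext v
  simp only [Finset.mem_union, Finset.mem_image, Finset.mem_univ, true_and,
    Finset.mem_singleton, mem_finsetOf, Set.mem_setOf_eq, lzVPred_iff, lzWPred_iff]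
  constructor
  · rintro (⟨b, rfl⟩ | rfl)
    · exact Or.inl ⟨↑b, b.isLt, h1, b.isLt, rfl⟩
    · exact Or.inr ⟨h2, hc, rfl⟩
  · rintro (⟨c', hc', hi, hb, rfl⟩ | ⟨hi, hb, rfl⟩)
    · exact Or.inl ⟨⟨c', hb⟩, rfl⟩
    · exact Or.inr rfl

lemma union_WW {M l : ℕ} (r1 r2 c : ℕ) (h1 : r1 < l-1) (h2 : r2 < l-1) (hc : c < k-1) :
    ((Finset.univ.image fun b : Fin (k-1) => (Sum.inr (⟨r1,h1⟩, b) : lzV k M l)) ∪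
      {Sum.inr (⟨r2,h2⟩, ⟨c,hc⟩)})
      = finsetOf {v | (∃ c' < k-1, lzWPred k M l r1 c' v) ∨ lzWPred k M l r2 c v} := by
  ext v
  simp only [Finset.mem_union, Finset.mem_image, Finset.mem_univ, true_and,
    Finset.mem_singleton, mem_finsetOf, Set.mem_setOf_eq, lzWPred_iff]
  constructor
  · rintro (⟨b, rfl⟩ | rfl)
    · exact Or.inl ⟨↑b, b.isLt, h1, b.isLt, rfl⟩
    · exact Or.inr ⟨h2, hc, rfl⟩
  · rintro (⟨c', hc', hi, hb, rfl⟩ | ⟨hi, hb, rfl⟩)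
    · exact Or.inl ⟨⟨c', hb⟩, rfl⟩
    · exact Or.inr rfl

lemma union_WV {M l : ℕ} (r1 i2 c : ℕ) (h1 : r1 < l-1) (h2 : i2 < M) (hc : c < k-1) :
    ((Finset.univ.image fun b : Fin (k-1) => (Sum.inr (⟨r1,h1⟩, b) : lzV k M l)) ∪
      {Sum.inl (⟨i2,h2⟩, ⟨c,hc⟩)})
      = finsetOf {v | (∃ c' < k-1, lzWPred k M l r1 c' v) ∨ lzVPred k M l i2 c v} := by
  ext v
  simp only [Finset.mem_union, Finset.mem_image, Finset.mem_univ, true_and,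
    Finset.mem_singleton, mem_finsetOf, Set.mem_setOf_eq, lzVPred_iff, lzWPred_iff]
  constructor
  · rintro (⟨b, rfl⟩ | rfl)
    · exact Or.inl ⟨↑b, b.isLt, h1, b.isLt, rfl⟩
    · exact Or.inr ⟨h2, hc, rfl⟩
  · rintro (⟨c', hc', hi, hb, rfl⟩ | ⟨hi, hb, rfl⟩)
    · exact Or.inl ⟨⟨c', hb⟩, rfl⟩
    · exact Or.inr rfl

lemma edg_mem {j m : ℕ} (hj : 0 < j) (hm : 2 ≤ m) (t : ℕ) (j0 : Fin (k-1)) :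
    edg k j m hj hm t j0 ∈ (lz k j m).edges := by
  have hm0 : 0 < m := by omega
  have hcv := Nat.mod_lt (t - (j-1)) hm0
  show _ ∈ finsetsOf _
  rw [mem_finsetsOf]
  simp only [Set.mem_union, Set.mem_setOf_eq]
  unfold edg
  by_cases h1 : t + 1 < j
  · refine Or.inl (Or.inl (Or.inl ⟨t, ↑j0, h1, j0.isLt, ?_⟩))
    have e1 : (fun b => tV k j m hj hm t b)
        = fun b : Fin (k-1) => (Sum.inl (⟨t, by omega⟩, b) : lzV k j m) :=
      funext fun b => tV_eq_ladder hj hm (by omega) b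
    rw [e1, tV_eq_ladder hj hm h1 j0]
    exact union_VV t (t+1) ↑j0 (by omega) h1 j0.isLt
  · by_cases h2 : t < j
    · refine Or.inl (Or.inl (Or.inr ⟨↑j0, j0.isLt, ?_⟩))
      have e1 : (fun b => tV k j m hj hm t b)
          = fun b : Fin (k-1) => (Sum.inl (⟨j-1, by omega⟩, b) : lzV k j m) :=
        funext fun b => by
          rw [tV_eq_ladder hj hm h2 b]
          simp only [Sum.inl.injEq, Prod.ext_iff, Fin.ext_iff]
          exact ⟨by omega, trivial⟩
      have hc' : (t + 1 - (j-1)) % m = 1 := by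
        rw [show t + 1 - (j-1) = 1 by omega, Nat.mod_eq_of_lt (by omega)]
      rw [e1, tV_eq_zy hj hm (show ¬ t + 1 < j by omega)
        (show (t + 1 - (j-1)) % m ≠ 0 by omega)
        (show (t + 1 - (j-1)) % m - 1 = 0 by omega) (by omega) j0]
      exact union_VW (j-1) 0 ↑j0 (by omega) (by omega) j0.isLt
    · have he : t + 1 - (j-1) = (t - (j-1)) + 1 := by omega
      by_cases h0 : (t - (j-1)) % m = 0
      · refine Or.inl (Or.inl (Or.inr ⟨↑j0, j0.isLt, ?_⟩))
        have e1 : (fun b => tV k j m hj hm t b)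
            = fun b : Fin (k-1) => (Sum.inl (⟨j-1, by omega⟩, b) : lzV k j m) :=
          funext fun b => tV_eq_base hj hm h2 h0 b
        rw [e1, tV_eq_zy hj hm (show ¬ t + 1 < j by omega)
          (show (t + 1 - (j-1)) % m ≠ 0 by
            rw [he]; rcases mod_succ_cases (t - (j-1)) m hm with ⟨hA, _⟩ | ⟨_, hB⟩ <;> omega)
          (show (t + 1 - (j-1)) % m - 1 = 0 by
            rw [he]; rcases mod_succ_cases (t - (j-1)) m hm with ⟨hA, _⟩ | ⟨_, hB⟩ <;> omega)
          (by omega) j0]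
        exact union_VW (j-1) 0 ↑j0 (by omega) (by omega) j0.isLt
      · rcases mod_succ_cases (t - (j-1)) m hm with ⟨hA, hA2⟩ | ⟨hB, hB2⟩
        · refine Or.inl (Or.inr ⟨(t - (j-1)) % m - 1, ↑j0, by omega, j0.isLt, ?_⟩)
          have e1 : (fun b => tV k j m hj hm t b)
              = fun b : Fin (k-1) =>
                  (Sum.inr (⟨(t - (j-1)) % m - 1, by omega⟩, b) : lzV k j m) :=
            funext fun b => tV_eq_zy hj hm h2 h0 rfl (by omega) b
          rw [e1, tV_eq_zy hj hm (show ¬ t + 1 < j by omega)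
            (show (t + 1 - (j-1)) % m ≠ 0 by rw [he]; omega)
            (show (t + 1 - (j-1)) % m - 1 = (t - (j-1)) % m - 1 + 1 by rw [he]; omega)
            (show (t - (j-1)) % m - 1 + 1 < m - 1 by omega) j0]
          exact union_WW ((t - (j-1)) % m - 1) ((t - (j-1)) % m - 1 + 1) ↑j0
            (by omega) (by omega) j0.isLt
        · refine Or.inr ⟨↑j0, j0.isLt, ?_⟩
          have e1 : (fun b => tV k j m hj hm t b)
              = fun b : Fin (k-1) => (Sum.inr (⟨m-2, by omega⟩, b) : lzV k j m) :=
            funext fun b => tV_eq_zy hj hm h2 h0 (by omega) (by omega) b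
          rw [e1, tV_eq_base hj hm (show ¬ t + 1 < j by omega)
            (show (t + 1 - (j-1)) % m = 0 by rw [he]; exact hB) j0]
          exact union_WV (m-2) (j-1) ↑j0 (by omega) (by omega) j0.isLt

lemma edg_mem' {j m : ℕ} (hj : 0 < j) (hm : 2 ≤ m) {t t' : ℕ} (h : t' = t + 1)
    (j0 : Fin (k-1)) :
    ((Finset.univ.image fun b => tV k j m hj hm t b) ∪ {tV k j m hj hm t' j0})
      ∈ (lz k j m).edges := by
  subst h; exact edg_mem hj hm t j0

lemma lzStart_eq {M l : ℕ} (hM : 0 < M) :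
    lzStart k M l
      = Finset.univ.image fun b : Fin (k-1) => (Sum.inl (⟨0,hM⟩, b) : lzV k M l) := by
  ext v
  simp only [lzStart, mem_finsetOf, Set.mem_setOf_eq, Finset.mem_image, Finset.mem_univ,
    true_and, lzVPred_iff]
  constructor
  · rintro ⟨c, hc, h0, hb, rfl⟩; exact ⟨⟨c,hb⟩, rfl⟩
  · rintro ⟨b, rfl⟩; exact ⟨↑b, b.isLt, hM, b.isLt, rfl⟩

end LZHomAux

/-- For `k ≥ 3`, `m ≥ 2` and `1 ≤ j ≤ j'`, there is a
homomorphism from `LZ^{(k)}(j',m)` to `LZ^{(k)}(j,m)` mapping the starting set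
of `LZ(j',m)` bijectively onto the starting set of `LZ(j,m)`. -/
theorem lz_hom_shorten (k m j j' : ℕ) (hk : 3 ≤ k) (hm : 2 ≤ m)
    (hj : 1 ≤ j) (hjj : j ≤ j') :
    ∃ f : (lz k j' m).V → (lz k j m).V, IsHomOn (lz k j' m) (lz k j m) f ∧
      (lzStart k j' m).image f = lzStart k j m ∧
      Set.InjOn (fun v : lzV k j' m => f v) ↑(lzStart k j' m) := by
  have hj2 : 0 < j := hj
  have hj'2 : 0 < j' := by omega
  set F : lzV k j' m → lzV k j m := Sum.elim (fun p => tV k j m hj2 hm ↑p.1 p.2)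
      (fun p => tV k j m hj2 hm (j' + ↑p.1) p.2) with hFdef
  refine ⟨F, ?_, ?_, ?_⟩
  · intro e he
    show Finset.image F e ∈ (lz k j m).edges ∧ (Finset.image F e).card = e.card
    simp only [lz] at he
    replace he := (mem_finsetsOf (V := lzV k j' m) (e := e)).mp he
    rcases he with (((⟨i, c, hi, hc, hS⟩ | ⟨c, hc, hS⟩) | ⟨r, c, hr, hc, hS⟩) | ⟨c, hc, hS⟩)
    · -- ladder edge
      have hi0 : i < j' := by omega
      have hE : e = (Finset.univ.image fun b : Fin (k-1) =>
            (Sum.inl (⟨i, hi0⟩, b) : lzV k j' m)) ∪ {Sum.inl (⟨i+1, hi⟩, ⟨c, hc⟩)} :=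
        hS.trans (union_VV i (i+1) c hi0 hi hc).symm
      constructor
      · rw [hE, Finset.image_union, Finset.image_image, Finset.image_singleton]
        exact edg_mem' hj2 hm rfl ⟨c, hc⟩
      · have h1 : (Finset.image F e).card = k := by
          rw [hE, Finset.image_union, Finset.image_image, Finset.image_singleton]
          exact card_row_union hk _ _ (tV_inj hj2 hm i)
            (fun b => tV_ne' hj2 hm rfl b ⟨c, hc⟩)
        have h2 : e.card = k := by
          rw [hE]
          exact card_row_union hk _ _ (fun a b hab => by
              injection hab with h; exact (Prod.ext_iff.mp h).2)
            (fun b hcon => by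
              have h : i = i + 1 := congrArg Fin.val (Prod.ext_iff.mp (Sum.inl.inj hcon)).1
              omega)
        rw [h1, h2]
    · -- edge entering the zycle
      have hi0 : j' - 1 < j' := by omega
      have hr0 : (0:ℕ) < m - 1 := by omega
      have hE : e = (Finset.univ.image fun b : Fin (k-1) =>
            (Sum.inl (⟨j'-1, hi0⟩, b) : lzV k j' m)) ∪ {Sum.inr (⟨0, hr0⟩, ⟨c, hc⟩)} :=
        hS.trans (union_VW (j'-1) 0 c hi0 hr0 hc).symm
      constructor
      · rw [hE, Finset.image_union, Finset.image_image, Finset.image_singleton]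
        exact edg_mem' hj2 hm (show j' = (j'-1) + 1 by omega) ⟨c, hc⟩
      · have h1 : (Finset.image F e).card = k := by
          rw [hE, Finset.image_union, Finset.image_image, Finset.image_singleton]
          exact card_row_union hk _ _ (tV_inj hj2 hm (j'-1))
            (fun b => tV_ne' hj2 hm (show j' = (j'-1) + 1 by omega) b ⟨c, hc⟩)
        have h2 : e.card = k := by
          rw [hE]
          exact card_row_union hk _ _ (fun a b hab => by
            injection hab with h; exact (Prod.ext_iff.mp h).2)
            (fun b hcon => Sum.inl_ne_inr hcon)
        rw [h1, h2]
    · -- zycle edge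
      have hr0 : r < m - 1 := by omega
      have hE : e = (Finset.univ.image fun b : Fin (k-1) =>
            (Sum.inr (⟨r, hr0⟩, b) : lzV k j' m)) ∪ {Sum.inr (⟨r+1, hr⟩, ⟨c, hc⟩)} :=
        hS.trans (union_WW r (r+1) c hr0 hr hc).symm
      constructor
      · rw [hE, Finset.image_union, Finset.image_image, Finset.image_singleton]
        exact edg_mem' hj2 hm (show j' + (r+1) = (j' + r) + 1 by omega) ⟨c, hc⟩
      · have h1 : (Finset.image F e).card = k := by
          rw [hE, Finset.image_union, Finset.image_image, Finset.image_singleton]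
          exact card_row_union hk _ _ (tV_inj hj2 hm (j'+r))
            (fun b => tV_ne' hj2 hm (show j' + (r+1) = (j' + r) + 1 by omega) b ⟨c, hc⟩)
        have h2 : e.card = k := by
          rw [hE]
          exact card_row_union hk _ _ (fun a b hab => by
              injection hab with h; exact (Prod.ext_iff.mp h).2)
            (fun b hcon => by
              have h : r = r + 1 := congrArg Fin.val (Prod.ext_iff.mp (Sum.inr.inj hcon)).1
              omega)
        rw [h1, h2]
    · -- edge closing the zycle
      have hr0 : m - 2 < m - 1 := by omega
      have hi0 : j' - 1 < j' := by omega
      have hE : e = (Finset.univ.image fun b : Fin (k-1) =>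
            (Sum.inr (⟨m-2, hr0⟩, b) : lzV k j' m)) ∪ {Sum.inl (⟨j'-1, hi0⟩, ⟨c, hc⟩)} :=
        hS.trans (union_WV (m-2) (j'-1) c hr0 hi0 hc).symm
      have hx : F (Sum.inl (⟨j'-1, hi0⟩, ⟨c, hc⟩)) = tV k j m hj2 hm ((j'-1) + m) ⟨c, hc⟩ :=
        (tV_per hj2 hm (j'-1) (by omega) ⟨c, hc⟩).symm
      constructor
      · rw [hE, Finset.image_union, Finset.image_image, Finset.image_singleton, hx]
        exact edg_mem' hj2 hm (show (j'-1) + m = (j' + (m-2)) + 1 by omega) ⟨c, hc⟩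
      · have h1 : (Finset.image F e).card = k := by
          rw [hE, Finset.image_union, Finset.image_image, Finset.image_singleton, hx]
          exact card_row_union hk _ _ (tV_inj hj2 hm (j'+(m-2)))
            (fun b => tV_ne' hj2 hm (show (j'-1) + m = (j' + (m-2)) + 1 by omega) b ⟨c, hc⟩)
        have h2 : e.card = k := by
          rw [hE]
          exact card_row_union hk _ _ (fun a b hab => by
            injection hab with h; exact (Prod.ext_iff.mp h).2)
            (fun b hcon => Sum.inr_ne_inl hcon)
        rw [h1, h2]
  · rw [lzStart_eq hj'2]; refine Finset.image_image.trans ?_; rw [lzStart_eq hj2]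
    exact Finset.image_congr fun b _ => tV_eq_ladder hj2 hm hj2 b
  · intro v1 h1 v2 h2 hF
    rw [lzStart_eq hj'2] at h1 h2
    obtain ⟨b1, -, rfl⟩ := Finset.mem_image.mp (Finset.mem_coe.mp h1)
    obtain ⟨b2, -, rfl⟩ := Finset.mem_image.mp (Finset.mem_coe.mp h2)
    have hEq : tV k j m hj2 hm 0 b1 = tV k j m hj2 hm 0 b2 := hF
    rw [tV_inj hj2 hm 0 hEq]
end
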